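/- Shamir's (ℓ+1, N)-threshold secret sharing is correct and ℓ-private: for a secret s ∈ F and polynomial P(X) = s + Σ_{i=1}^{ℓ} r_i X^i with shares P(e_1), ..., P(e_N) at distinct nonzero evaluation points, (a) any ℓ+1 shares determine s uniquely, and (b) for any set of at most ℓ shares, as (r_1, ..., r_ℓ) ranges uniformly over F^ℓ, the joint distribution of those shares is uniform on F^ℓ and independent of s. -/
import Mathlib

open Polynomial

theorem shamir_correct_and_private {F : Type*} [Field F] [Fintype F] {ℓ N : ℕ}
    (hN : N < Fintype.card F)
    (e : Fin N → F) (he : Function.Injective e) (he0 : ∀ i, e i ≠ 0)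
    (P : F → (Fin ℓ → F) → F → F)
    (hP : ∀ s r X, P s r X = s + ∑ i, r i * X ^ ((i : ℕ) + 1)) :
    (∀ (s s' : F) (r r' : Fin ℓ → F) (I : Finset (Fin N)), I.card = ℓ + 1 →
        (∀ i ∈ I, P s r (e i) = P s' r' (e i)) → s = s') ∧
    (∀ (s : F) (I : Finset (Fin N)), I.card ≤ ℓ → ∀ v : Fin N → F,
        Nat.card {r : Fin ℓ → F // ∀ i ∈ I, P s r (e i) = v i}
          = Fintype.card F ^ (ℓ - I.card)) := by
  classical
  constructor
  · -- correctness
    intro s s' r r' I hI hagree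
    set D : F[X] := C (s - s') + ∑ j : Fin ℓ, C (r j - r' j) * X ^ ((j : ℕ) + 1) with hD
    have hdeg : D.natDegree ≤ ℓ := by
      refine (natDegree_add_le _ _).trans (max_le ?_ ?_)
      · simp
      · refine natDegree_sum_le_of_forall_le _ _ fun j _ => ?_
        refine (natDegree_C_mul_le _ _).trans ?_
        simpa using Nat.succ_le_of_lt j.2
    have heval : ∀ x : F, D.eval x = P s r x - P s' r' x := by
      intro x
      simp only [hD, eval_add, eval_C, eval_finset_sum, eval_mul, eval_pow, eval_X, hP,
        sub_mul, Finset.sum_sub_distrib]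
      ring
    have hzero : D = 0 := by
      refine Polynomial.eq_zero_of_natDegree_lt_card_of_eval_eq_zero D
        (f := fun i : I => e i) (he.comp Subtype.val_injective) (fun i => ?_) ?_
      · rw [heval, sub_eq_zero]
        exact hagree i i.2
      · rw [Fintype.card_coe, hI]
        omega
    have h0 : D.eval 0 = s - s' := by
      simp [hD, eval_finset_sum]
    rw [hzero] at h0
    simp only [eval_zero] at h0
    exact sub_eq_zero.mp h0.symm
  · -- privacy
    intro s I hk v
    set k := I.card with hkdef
    let L : (Fin ℓ → F) →ₗ[F] ({i // i ∈ I} → F) :=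
      { toFun := fun r i => ∑ j, r j * e i ^ ((j : ℕ) + 1)
        map_add' := by
          intro a b; funext i
          simp [add_mul, Finset.sum_add_distrib]
        map_smul' := by
          intro c a; funext i
          simp [Finset.mul_sum, mul_assoc] }
    have hsurj : Function.Surjective L := by
      intro t
      rcases isEmpty_or_nonempty {i // i ∈ I} with hI | hI
      · exact ⟨0, funext fun i => isEmptyElim i⟩
      · have hIne : I.Nonempty := ⟨hI.some.1, hI.some.2⟩
        have hℓpos : 0 < ℓ := lt_of_lt_of_le (Finset.card_pos.mpr hIne) hk
        set t' : Fin N → F := fun i => if h : i ∈ I then t ⟨i, h⟩ * (e i)⁻¹ else 0 with ht'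
        set Q : F[X] := Lagrange.interpolate I e t' with hQ
        have hQdeg : Q.degree < (k : ℕ) :=
          Lagrange.degree_interpolate_lt t' (Set.injOn_of_injective he)
        have hQnd : Q.natDegree < ℓ := by
          rcases eq_or_ne Q 0 with h | h
          · simp [h, hℓpos]
          · exact lt_of_lt_of_le ((natDegree_lt_iff_degree_lt h).mpr hQdeg) hk
        refine ⟨fun j => Q.coeff j, funext fun i => ?_⟩
        have heQ : Q.eval (e i) = t' i :=
          Lagrange.eval_interpolate_at_node t' (Set.injOn_of_injective he) i.2
        have hsum : ∑ j : Fin ℓ, Q.coeff j * e i ^ ((j : ℕ) + 1)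
            = e i * Q.eval (e i) := by
          rw [Polynomial.eval_eq_sum_range' hQnd, Finset.mul_sum,
            Fin.sum_univ_eq_sum_range (fun j => Q.coeff j * e i ^ (j + 1))]
          refine Finset.sum_congr rfl fun j _ => ?_
          ring
        show ∑ j : Fin ℓ, Q.coeff j * e i ^ ((j : ℕ) + 1) = t i
        rw [hsum, heQ, ht']
        simp only [i.2, dif_pos]
        rw [mul_comm]
        exact inv_mul_cancel_right₀ (he0 i.1) (t i)
    set t0 : {i // i ∈ I} → F := fun i => v i - s with ht0
    obtain ⟨r0, hr0⟩ := hsurj t0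
    have hiff : ∀ r : Fin ℓ → F, (∀ i ∈ I, P s r (e i) = v i) ↔ L r = t0 := by
      intro r
      constructor
      · intro h
        funext i
        have := h i i.2
        rw [hP] at this
        show ∑ j, r j * e i ^ ((j : ℕ) + 1) = v i - s
        linear_combination this
      · intro h i hi
        have := congrFun h ⟨i, hi⟩
        rw [hP]
        simp only [ht0] at this
        change ∑ j, r j * e i ^ ((j : ℕ) + 1) = v i - s at this
        linear_combination this
    have hcard1 : Nat.card {r : Fin ℓ → F // ∀ i ∈ I, P s r (e i) = v i}
        = Nat.card (LinearMap.ker L) := by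
      refine Nat.card_congr ((Equiv.subtypeEquivRight hiff).trans ?_)
      exact
        { toFun := fun r => ⟨r.1 - r0, by
            rw [LinearMap.mem_ker, map_sub, r.2, hr0, sub_self]⟩
          invFun := fun w => ⟨w.1 + r0, by
            rw [map_add, hr0, LinearMap.mem_ker.mp w.2, zero_add]⟩
          left_inv := fun r => by simp
          right_inv := fun w => by simp }
    have hrank : Module.finrank F (LinearMap.ker L) = ℓ - k := by
      have h1 := LinearMap.finrank_range_add_finrank_ker L
      have h2 : Module.finrank F (LinearMap.range L) = k := by
        rw [LinearMap.range_eq_top.mpr hsurj, finrank_top, Module.finrank_pi,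
          Fintype.card_coe]
      rw [h2, Module.finrank_fin_fun] at h1
      omega
    have hcard2 : Nat.card (LinearMap.ker L) = Fintype.card F ^ (ℓ - k) := by
      rw [Nat.card_eq_fintype_card, Module.card_eq_pow_finrank (K := F), hrank]
    rw [hcard1, hcard2]
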